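/- arXiv:2507.06947 — 3 statements merged into one kernel-verified Lean document; each statement's English description precedes it below -/
import Mathlib

section
/- Let d ≥ 1, let K be a convex body in ℝ^d, let F be a linear subspace of ℝ^d of dimension s with 0 ≤ s ≤ d−1, and let A : ℝ^d → ℝ^d be a self-adjoint positive definite F-operator. Set E = A(B^d) and assume E ⊆ K and that E has maximal volume among ellipsoids of revolution with axis F contained in K (for every F-operator B and every z ∈ ℝ^d with B(B^d) + z ⊆ K one has vol(B(B^d) + z) ≤ vol(E)). Then E ∩ F ⊆ K ∩ F ⊆ d • (E ∩ F), where d • S = {d·w : w ∈ S}. -/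
open MeasureTheory RealInnerProductSpace Metric Set Pointwise

noncomputable section

/-- An `F`-operator: an invertible linear map leaving `F` and `Fᗮ` invariant and acting
as a nonzero multiple of the identity on `Fᗮ`. -/
def IsFOperator {d : ℕ} (F : Submodule ℝ (EuclideanSpace ℝ (Fin d)))
    (A : EuclideanSpace ℝ (Fin d) ≃ₗ[ℝ] EuclideanSpace ℝ (Fin d)) : Prop :=
  (∀ x ∈ F, A x ∈ F) ∧ (∀ x ∈ Fᗮ, A x ∈ Fᗮ) ∧
    ∃ μ : ℝ, μ ≠ 0 ∧ ∀ x ∈ Fᗮ, A x = μ • x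

/-- The orthogonal projection onto `F`, as a map of the ambient space. -/
def projF {d : ℕ} (F : Submodule ℝ (EuclideanSpace ℝ (Fin d)))
    (x : EuclideanSpace ℝ (Fin d)) : EuclideanSpace ℝ (Fin d) :=
  (Submodule.orthogonalProjection F x : EuclideanSpace ℝ (Fin d))

/-- A contact pair of convex bodies `K ⊆ L`. -/
def IsContactPair {d : ℕ} (K L : Set (EuclideanSpace ℝ (Fin d)))
    (v p : EuclideanSpace ℝ (Fin d)) : Prop :=
  v ∈ frontier K ∧ v ∈ frontier L ∧ ⟪p, v⟫ = 1 ∧ ∀ x ∈ L, ⟪p, x⟫ ≤ 1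


set_option maxHeartbeats 800000 in
/-- scalar parameter lemma -/
lemma params (d : ℕ) (hd : 1 ≤ d) (h : ℝ) (hh : (d : ℝ) < h) :
    ∃ a b c : ℝ, a = 1 + c ∧ 0 < c ∧ 0 < b ∧ b ≤ 1 ∧ c + a < h ∧
      a ^ 2 + b ^ 2 * (h ^ 2 - 1) ≤ (h - c) ^ 2 ∧ 1 < a * b ^ (d - 1) := by
  set k : ℕ := d - 1 with hk
  have hdk : (d : ℝ) = (k : ℝ) + 1 := by
    have : d = k + 1 := (Nat.succ_pred_eq_of_pos hd).symm
    rw [this]; push_cast; ring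
  set m : ℝ := h - 1 with hm
  have hmk : (k : ℝ) < m := by rw [hm]; linarith [hdk ▸ hh]
  have hk0 : (0:ℝ) ≤ k := Nat.cast_nonneg k
  have hm0 : 0 < m := lt_of_le_of_lt hk0 hmk
  have hmk' : (0:ℝ) ≤ m - k := by linarith
  set c : ℝ := min 1 ((m - k) / (6 * k + 6)) with hc
  have hden : (0:ℝ) < 6 * k + 6 := by positivity
  have hc0 : 0 < c := lt_min one_pos (div_pos (by linarith) hden)
  have hc1 : c ≤ 1 := min_le_left _ _
  have hc2 : c ≤ (m - k) / (6 * k + 6) := min_le_right _ _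
  have hcm6 : c ≤ m / 6 := by
    refine hc2.trans ?_
    rw [div_le_div_iff₀ hden (by norm_num)]
    nlinarith [mul_nonneg hk0 hm0.le]
  set b : ℝ := Real.sqrt (1 - 2 * c / m) with hb
  have hbin : (0:ℝ) < 1 - 2 * c / m := by
    rw [sub_pos, div_lt_one hm0]; linarith
  have hbsq : b ^ 2 = 1 - 2 * c / m := Real.sq_sqrt hbin.le
  have hb0 : 0 < b := Real.sqrt_pos.mpr hbin
  have hb1 : b ≤ 1 := by
    nlinarith [hbsq, hb0, div_nonneg (by linarith : (0:ℝ) ≤ 2*c) hm0.le]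
  have hbm : b ^ 2 * m = m - 2 * c := by rw [hbsq]; field_simp
  refine ⟨1 + c, b, c, rfl, hc0, hb0, hb1, by linarith, ?_, ?_⟩
  · -- main inequality
    have hh1 : h = m + 1 := by rw [hm]; ring
    rw [hh1]
    have e1 : b ^ 2 * ((m+1) ^ 2 - 1) = (b ^ 2 * m) * (m + 2) := by ring
    rw [e1, hbm]; nlinarith [sq_nonneg c]
  · -- volume inequality
    have hbern : 1 - 2 * k * c / m ≤ (1 - 2 * c / m) ^ k := by
      have := one_add_mul_le_pow (a := -(2 * c / m))
        (by nlinarith [div_nonneg (by linarith : (0:ℝ) ≤ 2*c) hm0.le]) k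
      calc 1 - 2 * k * c / m = 1 + k * (-(2 * c / m)) := by ring
        _ ≤ (1 + -(2 * c / m)) ^ k := this
        _ = (1 - 2 * c / m) ^ k := by ring_nf
    have hkey : (k:ℝ) + 3 * k * c < m := by
      have e2 : (m - k) - 2*(3*(k:ℝ)*((m-k)/(6*k+6))) = (m-k)*6/(6*k+6) := by
        field_simp; ring
      have h4 : 0 ≤ (m-k)*6/(6*k+6) := by positivity
      have h5 : 3*(k:ℝ)*c ≤ 3*k*((m-k)/(6*k+6)) :=
        mul_le_mul_of_nonneg_left hc2 (by positivity)
      linarith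
    have hsq : 1 < ((1 + c) * b ^ k) ^ 2 := by
      have expand : ((1 + c) * b ^ k) ^ 2 = (1 + c)^2 * (b ^ 2) ^ k := by ring
      rw [expand, hbsq]
      have h1 : (1 + c)^2 * (1 - 2 * k * c / m) ≤ (1+c)^2 * (1 - 2*c/m)^k :=
        mul_le_mul_of_nonneg_left hbern (by positivity)
      refine lt_of_lt_of_le ?_ h1
      have hexp : (1+c)^2 * (1 - 2*k*c/m) - 1 = (c * (2 + c) * m - 2*k*c*(1+c)^2) / m := by
        field_simp; ring
      have e3 : 2*(k:ℝ)*c*(1+c)^2 ≤ 2*k*c*(1+3*c) := by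
        nlinarith [mul_nonneg (mul_nonneg hk0 hc0.le) (mul_nonneg hc0.le (sub_nonneg.mpr hc1))]
      have hpos : 0 < c * (2 + c) * m - 2*k*c*(1+c)^2 := by
        nlinarith [mul_pos hc0 hm0, mul_pos (mul_pos hc0 hc0) hm0,
          mul_lt_mul_of_pos_left hkey (by linarith : (0:ℝ) < 2*c)]
      nlinarith [div_pos hpos hm0]
    have hpos : 0 < (1 + c) * b ^ k := by positivity
    nlinarith [hsq, hpos]


lemma scal1 (h a b c s : ℝ) (hh : 1 < h) (hb0 : 0 < b)
    (hb2 : b ^ 2 * (h - 1) ≤ (h - 1) - 2 * c) (hc0 : 0 ≤ c) (ha : a = 1 + c)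
    (hsl : -1 ≤ s) (hsr : s ≤ 1) (hcase : h * (c + a * s) ≤ 1) :
    (c + a * s) ^ 2 + b ^ 2 * (1 - s ^ 2) ≤ 1 := by
  have hs2 : s ≤ c + a * s := by nlinarith
  have hhs : h * s ≤ 1 := by nlinarith
  have hbracket : 0 ≤ 2 * (1 - s) - (h - 1) * (s + (c + a * s)) := by nlinarith
  have hP : 0 ≤ c * (1 + s) * (2 * (1 - s) - (h - 1) * (s + (c + a * s))) :=
    mul_nonneg (mul_nonneg hc0 (by linarith)) hbracket
  have hQ : b ^ 2 * (h - 1) * (1 - s ^ 2) ≤ ((h - 1) - 2 * c) * (1 - s ^ 2) :=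
    mul_le_mul_of_nonneg_right hb2 (by nlinarith)
  nlinarith [hP, hQ]

lemma scal2 (h a c s B : ℝ) (hB : 0 ≤ B) (ha0 : 0 < a)
    (hC : a ^ 2 + B ≤ (h - c) ^ 2) :
    B * (1 - s ^ 2) ≤ (h - (c + a * s)) ^ 2 := by
  have hpos : 0 < a ^ 2 + B := by positivity
  nlinarith [sq_nonneg ((a ^ 2 + B) * s - a * (h - c)),
    mul_nonneg hB (by linarith : (0:ℝ) ≤ (h - c) ^ 2 - a ^ 2 - B), hpos]

lemma scal3 (h σ t D μ : ℝ) (hD : 0 < D) (hDdef : D = h ^ 2 - 1)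
    (hμD : μ * D = h * σ - 1) (ht : 0 ≤ t) (key : t * D ≤ (h - σ) ^ 2) :
    (σ - μ * h) ^ 2 + t ≤ (1 - μ) ^ 2 := by
  have e1 : D * (1 - μ) = h * (h - σ) := by
    have e : D * (1 - μ) = D - μ * D := by ring
    rw [e, hμD, hDdef]; ring
  have e2 : D * (σ - μ * h) = h - σ := by
    have e : D * (σ - μ * h) = D * σ - (μ * D) * h := by ring
    rw [e, hμD, hDdef]; ring
  have f1 : (D * (σ - μ * h)) ^ 2 = (h - σ) ^ 2 := by rw [e2]
  have f2 : (D * (1 - μ)) ^ 2 = (h * (h - σ)) ^ 2 := by rw [e1]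
  have f3 : D * (t * D) ≤ D * (h - σ) ^ 2 := mul_le_mul_of_nonneg_left key hD.le
  have f4 : (1 + D) * (h - σ) ^ 2 = h ^ 2 * (h - σ) ^ 2 := by rw [hDdef]; ring
  nlinarith [mul_pos hD hD, f1, f2, f3, f4]

set_option maxHeartbeats 1000000 in
lemma core {V : Type*} [NormedAddCommGroup V] [InnerProductSpace ℝ V]
    (u : V) (hu : ‖u‖ = 1) (h a b c : ℝ) (hh : 1 < h) (hb0 : 0 < b) (hb1 : b ≤ 1)
    (ha : a = 1 + c) (hc0 : 0 ≤ c) (hca : c + a < h)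
    (hmain : a ^ 2 + b ^ 2 * (h ^ 2 - 1) ≤ (h - c) ^ 2)
    (v : V) (hv : ‖v‖ ≤ 1) :
    ∃ μ : ℝ, ∃ q : V, 0 ≤ μ ∧ μ ≤ 1 ∧ ‖q‖ ≤ 1 ∧
      b • v + ((a - b) * ⟪u, v⟫) • u + c • u = μ • (h • u) + (1 - μ) • q := by
  set s : ℝ := ⟪u, v⟫ with hsdef
  set w : V := v - s • u with hwdef
  have hvw : v = s • u + w := by rw [hwdef]; abel
  have hwu : ⟪u, w⟫ = 0 := by
    rw [hwdef, inner_sub_right, real_inner_smul_right, real_inner_self_eq_norm_sq, hu]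
    simp [hsdef]
  have nf : ∀ α β : ℝ, ‖α • u + β • w‖ ^ 2 = α ^ 2 + β ^ 2 * ‖w‖ ^ 2 := by
    intro α β
    rw [norm_add_sq_real, real_inner_smul_left, real_inner_smul_right, hwu, norm_smul, norm_smul]
    simp [hu, mul_pow, sq_abs]
  have hs1 : |s| ≤ 1 := by
    calc |s| ≤ ‖u‖ * ‖v‖ := abs_real_inner_le_norm u v
      _ ≤ 1 := by rw [hu]; simpa using hv
  obtain ⟨hsl, hsr⟩ := abs_le.mp hs1
  have hw2 : ‖w‖ ^ 2 ≤ 1 - s ^ 2 := by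
    have hv2 : ‖v‖ ^ 2 = s ^ 2 + ‖w‖ ^ 2 := by
      conv_lhs => rw [hvw]
      have := nf s 1
      simpa using this
    nlinarith [norm_nonneg v]
  have hp : b • v + ((a - b) * s) • u + c • u = (c + a * s) • u + b • w := by
    conv_lhs => rw [hvw]
    match_scalars <;> ring
  have ha0 : 0 < a := by linarith
  have hσa : c + a * s ≤ c + a := by nlinarith
  have hb2 : b ^ 2 * (h - 1) ≤ (h - 1) - 2 * c := by nlinarith [sq_nonneg b]
  by_cases hcase : h * (c + a * s) ≤ 1
  · -- inside the ball part
    refine ⟨0, (c + a * s) • u + b • w, le_refl 0, by norm_num, ?_, by rw [hp]; simp⟩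
    have hkey := scal1 h a b c s hh hb0 hb2 hc0 ha hsl hsr hcase
    have hq2 : ‖(c + a * s) • u + b • w‖ ^ 2 ≤ 1 := by
      rw [nf]
      nlinarith [sq_nonneg b]
    nlinarith [norm_nonneg ((c + a * s) • u + b • w)]
  · -- cone part
    push_neg at hcase
    set σ : ℝ := c + a * s with hσdef
    set D : ℝ := h ^ 2 - 1 with hDdef
    have hD : 0 < D := by nlinarith
    set μ : ℝ := (h * σ - 1) / D with hμdef
    have hμD : μ * D = h * σ - 1 := by rw [hμdef, div_mul_cancel₀ _ hD.ne']
    have hμ0 : 0 ≤ μ := div_nonneg (by linarith) hD.le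
    have hσh : σ < h := lt_of_le_of_lt hσa hca
    have hμ1 : μ < 1 := by
      rw [hμdef, div_lt_one hD]; nlinarith
    have h1μ : 0 < 1 - μ := by linarith
    refine ⟨μ, (1 - μ)⁻¹ • ((σ - μ * h) • u + b • w), hμ0, hμ1.le, ?_, ?_⟩
    · -- norm bound
      have key : b ^ 2 * (1 - s ^ 2) * D ≤ (h - σ) ^ 2 := by
        rw [hσdef]
        have := scal2 h a c s (b ^ 2 * D) (by positivity) ha0 (by linarith)
        nlinarith [this]
      have keyμ : (σ - μ * h) ^ 2 + b ^ 2 * (1 - s ^ 2) ≤ (1 - μ) ^ 2 :=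
        scal3 h σ (b ^ 2 * (1 - s ^ 2)) D μ hD hDdef hμD (by nlinarith [sq_nonneg b]) key
      have hq2 : ‖(1 - μ)⁻¹ • ((σ - μ * h) • u + b • w)‖ ^ 2 ≤ 1 := by
        rw [norm_smul, mul_pow, nf, Real.norm_eq_abs]
        have : |(1 - μ)⁻¹| = (1 - μ)⁻¹ := abs_of_pos (by positivity)
        rw [this]
        rw [inv_pow, inv_mul_le_iff₀ (by positivity), mul_one]
        nlinarith [sq_nonneg b]
      nlinarith [norm_nonneg ((1 - μ)⁻¹ • ((σ - μ * h) • u + b • w)), hq2]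
    · -- the convex combination identity
      have h1μ' : (1:ℝ) - μ ≠ 0 := by linarith
      rw [hp, smul_smul ((1:ℝ) - μ) (1 - μ)⁻¹, mul_inv_cancel₀ h1μ', one_smul]
      match_scalars <;> ring



variable {d : ℕ}

abbrev EucV (d : ℕ) := EuclideanSpace ℝ (Fin d)

def Tmap (a b : ℝ) (u : EucV d) : EucV d →ₗ[ℝ] EucV d :=
  b • LinearMap.id + (a - b) • (LinearMap.smulRight ((innerSL ℝ u).toLinearMap) u)

lemma Tmap_apply (a b : ℝ) (u v : EucV d) :
    Tmap a b u v = b • v + ((a - b) * ⟪u, v⟫) • u := by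
  simp [Tmap, smul_smul]

lemma Tmap_comp (a b : ℝ) (ha : a ≠ 0) (hb : b ≠ 0) (u : EucV d) (hu : ‖u‖ = 1) (v : EucV d) :
    Tmap a b u (Tmap a⁻¹ b⁻¹ u v) = v := by
  have huu : ⟪u, u⟫ = 1 := by
    rw [real_inner_self_eq_norm_sq, hu]; norm_num
  rw [Tmap_apply, Tmap_apply, inner_add_right, real_inner_smul_right, real_inner_smul_right, huu]
  match_scalars <;> field_simp <;> ring

def Tequiv (a b : ℝ) (ha : a ≠ 0) (hb : b ≠ 0) (u : EucV d) (hu : ‖u‖ = 1) :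
    EucV d ≃ₗ[ℝ] EucV d :=
  LinearEquiv.ofLinear (Tmap a b u) (Tmap a⁻¹ b⁻¹ u)
    (LinearMap.ext fun v => Tmap_comp a b ha hb u hu v)
    (LinearMap.ext fun v => by
      have := Tmap_comp a⁻¹ b⁻¹ (inv_ne_zero ha) (inv_ne_zero hb) u hu v
      simpa using this)

lemma Tequiv_apply (a b : ℝ) (ha : a ≠ 0) (hb : b ≠ 0) (u : EucV d) (hu : ‖u‖ = 1) (v : EucV d) :
    Tequiv a b ha hb u hu v = b • v + ((a - b) * ⟪u, v⟫) • u := Tmap_apply a b u v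

lemma Tequiv_coe {d : ℕ} (a b : ℝ) (ha : a ≠ 0) (hb : b ≠ 0) (u : EucV d) (hu : ‖u‖ = 1) :
    (Tequiv a b ha hb u hu : EucV d →ₗ[ℝ] EucV d) = Tmap a b u := rfl

lemma det_Tmap (hd : 1 ≤ d) (a b : ℝ) (u : EucV d) (hu : ‖u‖ = 1) :
    LinearMap.det (Tmap a b u) = a * b ^ (d - 1) := by
  haveI : NeZero d := ⟨by omega⟩
  have hcard : Module.finrank ℝ (EucV d) = Fintype.card (Fin d) := by
    simp [finrank_euclideanSpace_fin]
  have hON : Orthonormal ℝ (Set.restrict {(0 : Fin d)} (fun _ : Fin d => u)) := by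
    constructor
    · intro i; exact hu
    · intro i j hij
      exact absurd (Subtype.ext (by
        have hi := i.2; have hj := j.2
        simp only [Set.mem_singleton_iff] at hi hj
        rw [hi, hj])) hij
  obtain ⟨β, hβ⟩ := Orthonormal.exists_orthonormalBasis_extension_of_card_eq hcard hON
  have hβ0 : β 0 = u := hβ 0 rfl
  have horth := orthonormal_iff_ite.mp β.orthonormal
  have entry : ∀ i j, (LinearMap.toMatrix β.toBasis β.toBasis (Tmap a b u)) i j
      = b * (if i = j then 1 else 0)
        + ((a - b) * (if (0 : Fin d) = j then 1 else 0)) * (if i = 0 then 1 else 0) := by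
    intro i j
    rw [LinearMap.toMatrix_apply, OrthonormalBasis.coe_toBasis,
      OrthonormalBasis.coe_toBasis_repr_apply, OrthonormalBasis.repr_apply_apply,
      Tmap_apply, ← hβ0, inner_add_right, real_inner_smul_right, real_inner_smul_right,
      horth i j, horth 0 j, horth i 0]
  have hmat : LinearMap.toMatrix β.toBasis β.toBasis (Tmap a b u)
      = Matrix.diagonal (fun i => if i = 0 then a else b) := by
    ext i j
    rw [entry]
    by_cases hij : i = j
    · subst hij
      by_cases hi0 : i = 0
      · subst hi0
        simp [Matrix.diagonal]
      · have h0i : ¬ ((0 : Fin d) = i) := fun hh => hi0 hh.symm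
        simp [Matrix.diagonal, hi0, h0i]
    · have hdia : Matrix.diagonal (fun i => if i = 0 then a else b) i j = 0 :=
        Matrix.diagonal_apply_ne _ hij
      rw [hdia]
      by_cases hj0 : j = 0
      · subst hj0
        have hi0 : ¬ (i = 0) := hij
        simp [hi0]
      · have h0j : ¬ ((0 : Fin d) = j) := fun hh => hj0 hh.symm
        simp [hij, h0j]
  rw [← LinearMap.det_toMatrix β.toBasis, hmat, Matrix.det_diagonal]
  rw [← Finset.mul_prod_erase Finset.univ _ (Finset.mem_univ (0 : Fin d))]
  simp only [if_pos rfl]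
  congr 1
  rw [Finset.prod_congr rfl (fun i hi => by
    rw [if_neg (Finset.ne_of_mem_erase hi)]), Finset.prod_const]
  congr 1
  rw [Finset.card_erase_of_mem (Finset.mem_univ _), Finset.card_univ, Fintype.card_fin]


/-- **Sandwiching in `F` for a maximal ellipsoid of revolution.**
If `E = A(B^d)` is a maximal-volume ellipsoid of revolution with axis `F` (`dim F = s ≤ d-1`)
contained in a convex body `K`, with `A` a self-adjoint positive definite `F`-operator, then
`E ∩ F ⊆ K ∩ F ⊆ d • (E ∩ F)`. -/
theorem stmt6 {d : ℕ} (hd : 1 ≤ d)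
    (K : Set (EuclideanSpace ℝ (Fin d)))
    (hKcpt : IsCompact K) (hKconv : Convex ℝ K) (hKint : (interior K).Nonempty)
    (F : Submodule ℝ (EuclideanSpace ℝ (Fin d))) (s : ℕ)
    (hs : Module.finrank ℝ F = s) (hsd : s < d)
    (A : EuclideanSpace ℝ (Fin d) ≃ₗ[ℝ] EuclideanSpace ℝ (Fin d))
    (hA : IsFOperator F A)
    (hAsa : ∀ x y : EuclideanSpace ℝ (Fin d), ⟪A x, y⟫ = ⟪x, A y⟫)
    (hApd : ∀ x : EuclideanSpace ℝ (Fin d), x ≠ 0 → 0 < ⟪A x, x⟫)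
    (E : Set (EuclideanSpace ℝ (Fin d)))
    (hE : E = A '' closedBall (0 : EuclideanSpace ℝ (Fin d)) 1)
    (hEK : E ⊆ K)
    (hmax : ∀ (B : EuclideanSpace ℝ (Fin d) ≃ₗ[ℝ] EuclideanSpace ℝ (Fin d)),
      IsFOperator F B → ∀ z : EuclideanSpace ℝ (Fin d),
        (fun y => B y + z) '' closedBall (0 : EuclideanSpace ℝ (Fin d)) 1 ⊆ K →
        volume ((fun y => B y + z) '' closedBall (0 : EuclideanSpace ℝ (Fin d)) 1) ≤ volume E) :
    E ∩ (F : Set (EuclideanSpace ℝ (Fin d))) ⊆ K ∩ (F : Set (EuclideanSpace ℝ (Fin d))) ∧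
    K ∩ (F : Set (EuclideanSpace ℝ (Fin d))) ⊆
      (d : ℝ) • (E ∩ (F : Set (EuclideanSpace ℝ (Fin d)))) := by
  have hd0 : (0:ℝ) < (d:ℝ) := by exact_mod_cast Nat.lt_of_lt_of_le Nat.zero_lt_one hd
  constructor
  · exact fun x hx => ⟨hEK hx.1, hx.2⟩
  rintro x ⟨hxK, hxF⟩
  -- A and A.symm preserve F
  have hmapF : F.map A.toLinearMap = F := by
    apply Submodule.eq_of_le_of_finrank_le
    · rintro _ ⟨w, hw, rfl⟩; exact hA.1 w hw
    · rw [LinearEquiv.finrank_map_eq A F]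
  have hsymmF : ∀ w ∈ F, A.symm w ∈ F := by
    intro w hw
    rw [← hmapF] at hw
    obtain ⟨w', hw', rfl⟩ := hw
    simpa using hw'
  set y : EuclideanSpace ℝ (Fin d) := A.symm x with hydef
  have hyF : y ∈ F := hsymmF x hxF
  have hAy : A y = x := A.apply_symm_apply x
  by_cases hyn : ‖y‖ ≤ (d:ℝ)
  · refine Set.mem_smul_set.mpr ⟨(d:ℝ)⁻¹ • x, ⟨?_, F.smul_mem _ hxF⟩, ?_⟩
    · rw [hE]
      refine ⟨(d:ℝ)⁻¹ • y, ?_, ?_⟩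
      · rw [mem_closedBall_zero_iff, norm_smul, Real.norm_eq_abs,
          abs_of_pos (by positivity)]
        rw [inv_mul_le_iff₀ hd0, mul_one]
        exact hyn
      · rw [_root_.map_smul, hAy]
    · rw [smul_smul, mul_inv_cancel₀ hd0.ne', one_smul]
  · exfalso
    push_neg at hyn
    have hy0 : y ≠ 0 := by
      intro hc; rw [hc] at hyn; simp at hyn; linarith
    set h : ℝ := ‖y‖ with hhdef
    have hh0 : 0 < h := norm_pos_iff.mpr hy0
    set u : EuclideanSpace ℝ (Fin d) := h⁻¹ • y with hudef
    have huN : ‖u‖ = 1 := by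
      rw [hudef, norm_smul, Real.norm_eq_abs, abs_of_pos (by positivity), hhdef,
        inv_mul_cancel₀ hh0.ne']
    have huF : u ∈ F := F.smul_mem _ hyF
    have hhu : h • u = y := by
      rw [hudef, smul_smul, mul_inv_cancel₀ hh0.ne', one_smul]
    have h1h : 1 < h := lt_of_le_of_lt (by exact_mod_cast hd) hyn
    obtain ⟨a, b, c, hac, hc0, hb0, hb1, hca, hmain, hdet⟩ := params d hd h hyn
    have ha0 : (0:ℝ) < a := by rw [hac]; linarith
    set Teq := Tequiv a b ha0.ne' hb0.ne' u huN with hTeq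
    set B' := Teq.trans A with hB'
    set z : EuclideanSpace ℝ (Fin d) := A (c • u) with hz
    -- containment
    have hsub : (fun v => B' v + z) '' closedBall (0 : EuclideanSpace ℝ (Fin d)) 1 ⊆ K := by
      rintro _ ⟨v, hv, rfl⟩
      rw [mem_closedBall_zero_iff] at hv
      obtain ⟨μ, q, hμ0, hμ1, hq, hpq⟩ :=
        core u huN h a b c h1h hb0 hb1 hac hc0.le hca hmain v hv
      have hAq : A q ∈ K := by
        apply hEK
        rw [hE]
        exact ⟨q, mem_closedBall_zero_iff.mpr hq, rfl⟩
      have hcomb : B' v + z = μ • x + (1 - μ) • (A q) := by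
        have e1 : B' v + z = A (Teq v + c • u) := by
          rw [hB']
          simp only [LinearEquiv.trans_apply, hz, ← map_add]
        rw [e1, Tequiv_apply a b ha0.ne' hb0.ne' u huN v, hpq]
        rw [map_add, _root_.map_smul, hhu, hAy, _root_.map_smul]
      show B' v + z ∈ K
      rw [hcomb]
      exact hKconv hxK hAq hμ0 (by linarith) (by ring)
    -- F-operator
    have hFop : IsFOperator F B' := by
      obtain ⟨hA1, hA2, μ₀, hμ₀0, hμ₀⟩ := hA
      have hTF : ∀ w ∈ F, Teq w ∈ F := by
        intro w hw
        rw [hTeq, Tequiv_apply]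
        exact F.add_mem (F.smul_mem _ hw) (F.smul_mem _ huF)
      have hTperp : ∀ w ∈ Fᗮ, Teq w = b • w := by
        intro w hw
        rw [hTeq, Tequiv_apply]
        have : ⟪u, w⟫ = 0 := (Submodule.mem_orthogonal F w).mp hw u huF
        rw [this, mul_zero, zero_smul, add_zero]
      refine ⟨?_, ?_, μ₀ * b, mul_ne_zero hμ₀0 hb0.ne', ?_⟩
      · intro w hw
        rw [hB', LinearEquiv.trans_apply]
        exact hA1 _ (hTF w hw)
      · intro w hw
        rw [hB', LinearEquiv.trans_apply, hTperp w hw, _root_.map_smul]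
        exact Fᗮ.smul_mem _ (hA2 w hw)
      · intro w hw
        rw [hB', LinearEquiv.trans_apply, hTperp w hw, _root_.map_smul, hμ₀ w hw,
          smul_smul, mul_comm]
    -- volume comparison
    have hvol := hmax B' hFop z hsub
    set Bd : Set (EuclideanSpace ℝ (Fin d)) := closedBall 0 1 with hBd
    have himg : (fun v => B' v + z) '' Bd = (fun w => w + z) '' (⇑B' '' Bd) := by
      rw [← Set.image_comp]; rfl
    have htrans : volume ((fun w => w + z) '' (⇑B' '' Bd)) = volume (⇑B' '' Bd) := by
      rw [Set.image_add_right, measure_preimage_add_right]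
    have hB'lin : (⇑B' '' Bd) = (B'.toLinearMap '' Bd) := rfl
    have hvol1 : volume ((fun v => B' v + z) '' Bd)
        = ENNReal.ofReal |LinearMap.det (B'.toLinearMap)| * volume Bd := by
      rw [himg, htrans, hB'lin, Measure.addHaar_image_linearMap]
    have hvolE : volume E = ENNReal.ofReal |LinearMap.det (A.toLinearMap)| * volume Bd := by
      rw [hE]
      have : (⇑A '' Bd) = (A.toLinearMap '' Bd) := rfl
      rw [this, Measure.addHaar_image_linearMap]
    have hdetB' : LinearMap.det (B'.toLinearMap)
        = LinearMap.det (A.toLinearMap) * (a * b ^ (d - 1)) := by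
      rw [hB']
      have : (Teq.trans A).toLinearMap = A.toLinearMap ∘ₗ Teq.toLinearMap := rfl
      rw [this, LinearMap.det_comp, hTeq, Tequiv_coe, det_Tmap hd a b u huN]
    have hdetA0 : LinearMap.det (A.toLinearMap) ≠ 0 := by
      exact LinearEquiv.isUnit_det' A |>.ne_zero
    have hBpos : volume Bd ≠ 0 := (measure_closedBall_pos volume _ one_pos).ne'
    have hBfin : volume Bd ≠ ⊤ := measure_closedBall_lt_top.ne
    rw [hvol1, hvolE] at hvol
    rw [ENNReal.mul_le_mul_iff_left hBpos hBfin] at hvol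
    rw [ENNReal.ofReal_le_ofReal_iff (abs_nonneg _)] at hvol
    rw [hdetB', abs_mul] at hvol
    have habs : |a * b ^ (d-1)| = a * b ^ (d-1) := abs_of_pos (by positivity)
    rw [habs] at hvol
    have hdA : 0 < |LinearMap.det (A.toLinearMap)| := abs_pos.mpr hdetA0
    nlinarith [hvol, hdA, hdet]
end
end

section
/- Let d ≥ 1, let F be a linear subspace of ℝ^d, let m ≥ 1, let v₁, …, v_m, p₁, …, p_m ∈ ℝ^d, and let α₁, …, α_m be positive reals satisfying: (a) P_F(Σ_{i=1}^m αᵢ ⟨vᵢ, P_F x⟩ pᵢ) = P_F x for every x ∈ ℝ^d; (b) Σ_{i=1}^m αᵢ pᵢ = 0; (c) Σ_{i=1}^m αᵢ P_F vᵢ = 0; and (d) Σ_{i=1}^m αᵢ = d. Then for every x ∈ F with ⟨pᵢ, x⟩ ≤ 1 for all i ∈ {1, …, m}, one has −x ∈ d • P_F(conv{v₁, …, v_m}); that is, there exists y in the convex hull of {v₁, …, v_m} with −x = d · P_F y. -/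
open MeasureTheory RealInnerProductSpace Metric Set Pointwise

noncomputable section

lemma projF_linear {d : ℕ} (F : Submodule ℝ (EuclideanSpace ℝ (Fin d))) :
    projF F = (F.subtypeL.comp (Submodule.orthogonalProjection F) :
      EuclideanSpace ℝ (Fin d) →L[ℝ] EuclideanSpace ℝ (Fin d)) := rfl

lemma projF_inner_swap {d : ℕ} (F : Submodule ℝ (EuclideanSpace ℝ (Fin d)))
    (u w : EuclideanSpace ℝ (Fin d)) : ⟪projF F u, w⟫ = ⟪u, projF F w⟫ :=
  Submodule.inner_starProjection_left_eq_right F u w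

/-- **Inclusion for contact polytopes.**
Given vectors `vᵢ, pᵢ` and positive weights `αᵢ` with `P_F (∑ αᵢ pᵢ ⊗ vᵢ) P_F = P_F`,
`∑ αᵢ pᵢ = 0`, `∑ αᵢ P_F vᵢ = 0` and `∑ αᵢ = d`, every `x ∈ F` with `⟨pᵢ, x⟩ ≤ 1` for all `i`
satisfies `-x ∈ d • P_F (conv {v₁, …, v_m})`. -/
theorem stmt8 {d : ℕ} (hd : 1 ≤ d)
    (F : Submodule ℝ (EuclideanSpace ℝ (Fin d)))
    {m : ℕ} (hm : 1 ≤ m)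
    (v p : Fin m → EuclideanSpace ℝ (Fin d)) (α : Fin m → ℝ)
    (hα : ∀ i, 0 < α i)
    (ha : ∀ x, projF F (∑ i, (α i * ⟪v i, projF F x⟫) • p i) = projF F x)
    (hb : ∑ i, α i • p i = 0)
    (hc : ∑ i, α i • projF F (v i) = 0)
    (hsum : ∑ i, α i = (d : ℝ)) :
    ∀ x : EuclideanSpace ℝ (Fin d), x ∈ F → (∀ i, ⟪p i, x⟫ ≤ 1) →
      ∃ y ∈ convexHull ℝ (Set.range v), -x = (d : ℝ) • projF F y := by
  intro x hx hpx
  have hd0 : (0:ℝ) < (d:ℝ) := by exact_mod_cast hd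
  have hprojx : projF F x = x := by
    exact F.starProjection_eq_self_iff.mpr hx
  -- sum of α i * ⟪p i, x⟫ is 0
  have hsum0 : ∑ i, α i * ⟪p i, x⟫ = 0 := by
    have h := congrArg (fun w => (⟪w, x⟫ : ℝ)) hb
    simp only [sum_inner, real_inner_smul_left, inner_zero_left] at h
    exact h
  -- key adjoint identity
  have hkey : ∑ i, (α i * ⟪p i, x⟫) • projF F (v i) = x := by
    apply ext_inner_right ℝ
    intro z
    have haz := congrArg (fun w => (⟪x, w⟫ : ℝ)) (ha z)
    have hxz : (⟪x, projF F z⟫ : ℝ) = ⟪x, z⟫ := by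
      rw [← projF_inner_swap, hprojx]
    have hxproj : (⟪x, projF F (∑ i, (α i * ⟪v i, projF F z⟫) • p i)⟫ : ℝ)
        = ∑ i, (α i * ⟪v i, projF F z⟫) * ⟪x, p i⟫ := by
      rw [← projF_inner_swap, hprojx, inner_sum]
      simp only [real_inner_smul_right]
    rw [hxproj, hxz] at haz
    calc (⟪∑ i, (α i * ⟪p i, x⟫) • projF F (v i), z⟫ : ℝ)
        = ∑ i, (α i * ⟪p i, x⟫) * ⟪v i, projF F z⟫ := by
          rw [sum_inner]
          refine Finset.sum_congr rfl fun i _ => ?_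
          rw [real_inner_smul_left, projF_inner_swap]
      _ = ∑ i, (α i * ⟪v i, projF F z⟫) * ⟪x, p i⟫ := by
          refine Finset.sum_congr rfl fun i _ => ?_
          rw [real_inner_comm (p i) x]; ring
      _ = ⟪x, z⟫ := haz
      _ = ⟪x, z⟫ := rfl
  -- the convex combination
  set β : Fin m → ℝ := fun i => α i * (1 - ⟪p i, x⟫) / d with hβ
  have hβ0 : ∀ i ∈ Finset.univ, 0 ≤ β i := by
    intro i _
    have := hpx i
    have : 0 ≤ α i * (1 - ⟪p i, x⟫) :=
      mul_nonneg (hα i).le (by linarith)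
    positivity
  have hβsum : ∑ i : Fin m, β i = 1 := by
    have : ∑ i : Fin m, α i * (1 - ⟪p i, x⟫) = d := by
      have : ∑ i : Fin m, α i * (1 - ⟪p i, x⟫)
          = ∑ i, α i - ∑ i, α i * ⟪p i, x⟫ := by
        rw [← Finset.sum_sub_distrib]
        exact Finset.sum_congr rfl fun i _ => by ring
      rw [this, hsum, hsum0, sub_zero]
    simp only [hβ, div_eq_mul_inv, ← Finset.sum_mul, this]
    field_simp
  refine ⟨∑ i, β i • v i, ?_, ?_⟩
  · exact (convex_convexHull ℝ (Set.range v)).sum_mem hβ0 hβsum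
      (fun i _ => subset_convexHull ℝ _ ⟨i, rfl⟩)
  · have hlin : projF F (∑ i, β i • v i) = ∑ i, β i • projF F (v i) := by
      rw [projF_linear]
      simp [map_sum]
    rw [hlin, Finset.smul_sum]
    have : ∀ i, (d:ℝ) • β i • projF F (v i)
        = α i • projF F (v i) - (α i * ⟪p i, x⟫) • projF F (v i) := by
      intro i
      rw [smul_smul, ← sub_smul]
      congr 1
      rw [hβ]
      field_simp
    rw [Finset.sum_congr rfl (fun i _ => this i), Finset.sum_sub_distrib, hc, hkey]
    simp
end
end

section
/- Let d ≥ 1, let K and L be convex bodies in ℝ^d, and let F be a linear subspace of ℝ^d. Suppose S₁ and S₂ are self-adjoint positive definite F-operators and x₁, x₂ ∈ ℝ^d are such that K₁ = x₁ + S₁(K) ⊆ L and K₂ = x₂ + S₂(K) ⊆ L, and both K₁ and K₂ have maximal volume in the following sense: for every self-adjoint positive definite F-operator S and every x ∈ ℝ^d with x + S(K) ⊆ L, one has vol(x + S(K)) ≤ vol(K₁) and vol(x + S(K)) ≤ vol(K₂). Then S₁ = S₂; in particular, K₂ = K₁ + (x₂ − x₁), i.e. K₁ and K₂ are translates of each other.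 -/
open MeasureTheory RealInnerProductSpace Metric Set Pointwise

noncomputable section

open Matrix in
private lemma stmt17_aux_one {d : ℕ} {N : Matrix (Fin d) (Fin d) ℝ} (hN : N.PosDef)
    (hdet : N.det = 1) (hle : (1 + N).det ≤ 2 ^ d) : N = 1 := by
  have hH := hN.isHermitian
  set U := (hH.eigenvectorUnitary : Matrix (Fin d) (Fin d) ℝ) with hU
  set lam := hH.eigenvalues with hlam
  have hUU : U * star U = 1 := (Matrix.mem_unitaryGroup_iff).mp hH.eigenvectorUnitary.2
  have hspec : N = U * Matrix.diagonal (RCLike.ofReal ∘ lam) * star U := hH.spectral_theorem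
  have hcoe : (RCLike.ofReal ∘ lam : Fin d → ℝ) = lam := by ext i; simp
  have hspec' : N = U * Matrix.diagonal lam * star U := by rw [hspec, hcoe]
  have hone : (1 + N) = U * Matrix.diagonal (fun i => 1 + lam i) * star U := by
    have : Matrix.diagonal (fun i => 1 + lam i) = 1 + Matrix.diagonal lam := by
      rw [← Matrix.diagonal_one, Matrix.diagonal_add]
    rw [this, Matrix.mul_add, Matrix.add_mul, ← hspec', Matrix.mul_one, hUU]
  have hdetU : U.det * (star U).det = 1 := by rw [← Matrix.det_mul, hUU, Matrix.det_one]
  have hdet1 : (1 + N).det = ∏ i, (1 + lam i) := by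
    rw [hone, Matrix.det_mul, Matrix.det_mul, mul_comm, ← mul_assoc, mul_comm ((star U).det),
      hdetU, one_mul, Matrix.det_diagonal]
  have hpos : ∀ i, 0 < lam i := hN.eigenvalues_pos
  have hterm : ∀ i : Fin d, 2 * Real.sqrt (lam i) ≤ 1 + lam i := by
    intro i
    nlinarith [sq_nonneg (Real.sqrt (lam i) - 1), Real.sq_sqrt (hpos i).le]
  have hprodlam : ∏ i, lam i = 1 := by
    have := hH.det_eq_prod_eigenvalues
    rw [hdet] at this
    have : (1:ℝ) = ∏ i, lam i := by exact_mod_cast this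
    exact this.symm
  have hsq : (∏ i, Real.sqrt (lam i)) ^ 2 = 1 := by
    rw [← Finset.prod_pow]
    calc ∏ i, Real.sqrt (lam i) ^ 2 = ∏ i, lam i := by
          refine Finset.prod_congr rfl fun i _ => Real.sq_sqrt (hpos i).le
      _ = 1 := hprodlam
  have hsqrtprod : ∏ i, Real.sqrt (lam i) = 1 := by
    have hnn : 0 ≤ ∏ i, Real.sqrt (lam i) :=
      Finset.prod_nonneg fun i _ => Real.sqrt_nonneg _
    nlinarith
  have hprod2 : ∏ i : Fin d, (2 * Real.sqrt (lam i)) = 2 ^ d := by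
    rw [Finset.prod_mul_distrib, hsqrtprod, mul_one, Finset.prod_const]
    simp
  have heq : ∀ i : Fin d, 1 + lam i = 2 * Real.sqrt (lam i) := by
    by_contra hcon
    push_neg at hcon
    obtain ⟨j, hj⟩ := hcon
    have hjlt : 2 * Real.sqrt (lam j) < 1 + lam j := lt_of_le_of_ne (hterm j) (Ne.symm hj)
    have : (2:ℝ) ^ d < ∏ i, (1 + lam i) := by
      rw [← hprod2]
      exact Finset.prod_lt_prod (fun i _ => by have := hpos i; positivity)
        (fun i _ => hterm i) ⟨j, Finset.mem_univ j, hjlt⟩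
    rw [← hdet1] at this
    linarith
  have hlam1 : ∀ i, lam i = 1 := by
    intro i
    have h := heq i
    have hs := Real.sq_sqrt (hpos i).le
    nlinarith [Real.sqrt_nonneg (lam i)]
  have : Matrix.diagonal lam = 1 := by
    rw [show lam = fun _ => (1:ℝ) from funext hlam1]
    simp
  rw [hspec', this, Matrix.mul_one, hUU]

open scoped MatrixOrder in
open Matrix in
private lemma stmt17_aux_core {d : ℕ} {M₁ M₂ : Matrix (Fin d) (Fin d) ℝ}
    (h₁ : M₁.PosDef) (h₂ : M₂.PosDef)
    (hdet : M₁.det = M₂.det) (hle : (M₁ + M₂).det ≤ 2 ^ d * M₁.det) : M₁ = M₂ := by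
  set R := CFC.sqrt M₁ with hRdef
  have hRR : R * R = M₁ := CFC.sqrt_mul_sqrt_self M₁ h₁.posSemidef.nonneg
  have hRps : R.PosSemidef := (CFC.sqrt_nonneg M₁).posSemidef
  have hdet₁pos : 0 < M₁.det := h₁.det_pos
  have hRdet2 : R.det * R.det = M₁.det := by rw [← Matrix.det_mul, hRR]
  have hRdetne : R.det ≠ 0 := by
    intro h
    rw [h, mul_zero] at hRdet2
    exact hdet₁pos.ne' hRdet2.symm
  have hRunit : IsUnit R.det := hRdetne.isUnit
  set B := R⁻¹ with hBdef
  have hBR : B * R = 1 := Matrix.nonsing_inv_mul R hRunit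
  have hRB : R * B = 1 := Matrix.mul_nonsing_inv R hRunit
  have hBH : B.IsHermitian := hRps.isHermitian.inv
  have hBdet : B.det = (R.det)⁻¹ := by
    rw [hBdef, Matrix.det_nonsing_inv, Ring.inverse_eq_inv]
  set N := B * M₂ * B with hNdef
  have hNpd : N.PosDef := by
    refine Matrix.PosDef.of_dotProduct_mulVec_pos ?_ ?_
    · show (B * M₂ * B)ᴴ = B * M₂ * B
      rw [Matrix.conjTranspose_mul, Matrix.conjTranspose_mul, hBH.eq, h₂.isHermitian.eq,
        mul_assoc]
    · intro x hx
      have hBx : B *ᵥ x ≠ 0 := by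
        intro h
        have : R *ᵥ (B *ᵥ x) = 0 := by rw [h, Matrix.mulVec_zero]
        rw [Matrix.mulVec_mulVec, hRB, Matrix.one_mulVec] at this
        exact hx this
      have hpos := h₂.dotProduct_mulVec_pos hBx
      have hstar : star (B *ᵥ x) = Matrix.vecMul (star x) B := by
        rw [Matrix.star_mulVec, hBH.eq]
      calc (0:ℝ) < star (B *ᵥ x) ⬝ᵥ M₂ *ᵥ (B *ᵥ x) := hpos
        _ = star x ⬝ᵥ N *ᵥ x := by
            rw [hstar, Matrix.mulVec_mulVec, hNdef, ← Matrix.dotProduct_mulVec,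
              Matrix.mulVec_mulVec, mul_assoc]
  have hBMB : B * M₁ * B = 1 := by
    rw [← hRR, show B * (R * R) * B = B * R * (R * B) by simp only [mul_assoc], hBR, hRB, one_mul]
  have hNdet : N.det = 1 := by
    have h2 : N.det = M₂.det * (R.det)⁻¹ * (R.det)⁻¹ := by
      rw [hNdef, Matrix.det_mul, Matrix.det_mul, hBdet]; ring
    rw [h2, ← hdet, ← hRdet2]
    field_simp
  have hNle : (1 + N).det ≤ 2 ^ d := by
    have h1N : 1 + N = B * (M₁ + M₂) * B := by
      rw [Matrix.mul_add, Matrix.add_mul, hBMB, hNdef]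
    rw [h1N, Matrix.det_mul, Matrix.det_mul, hBdet]
    rw [show (R.det)⁻¹ * (M₁ + M₂).det * (R.det)⁻¹ = (M₁ + M₂).det / (R.det * R.det) by ring,
      hRdet2, div_le_iff₀ hdet₁pos]
    linarith
  have hN1 : N = 1 := stmt17_aux_one hNpd hNdet hNle
  have key : B * M₂ * B = B * M₁ * B := by rw [← hNdef, hN1, hBMB]
  have conj : ∀ X : Matrix (Fin d) (Fin d) ℝ, R * (B * X * B) * R = X := by
    intro X
    rw [show R * (B * X * B) * R = (R * B) * X * (B * R) by simp only [mul_assoc], hRB, hBR,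
      one_mul, mul_one]
  have := congrArg (fun X => R * X * R) key
  rw [conj M₂, conj M₁] at this
  exact this.symm

open Matrix in
private lemma stmt17_bridge_posdef {d : ℕ}
    (T : EuclideanSpace ℝ (Fin d) →ₗ[ℝ] EuclideanSpace ℝ (Fin d))
    (hsa : ∀ x y : EuclideanSpace ℝ (Fin d), ⟪T x, y⟫ = ⟪x, T y⟫)
    (hpd : ∀ x : EuclideanSpace ℝ (Fin d), x ≠ 0 → 0 < ⟪T x, x⟫) :
    (Matrix.toEuclideanLin.symm T).PosDef := by
  set M := Matrix.toEuclideanLin.symm T with hM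
  have hTM : Matrix.toEuclideanLin M = T := Matrix.toEuclideanLin.apply_symm_apply T
  refine Matrix.PosDef.of_dotProduct_mulVec_pos ?_ ?_
  · rw [Matrix.isHermitian_iff_isSymmetric, hTM]
    intro x y; exact hsa x y
  · intro x hx
    set x' : EuclideanSpace ℝ (Fin d) := (WithLp.equiv 2 _).symm x with hx'
    have hx'0 : x' ≠ 0 := by simpa [hx'] using hx
    have h1 : star x ⬝ᵥ M *ᵥ x = ⟪x', Matrix.toEuclideanLin M x'⟫ := by
      rw [dotProduct_comm]
      rfl
    rw [h1, hTM]
    calc (0:ℝ) < ⟪T x', x'⟫ := hpd x' hx'0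
      _ = ⟪x', T x'⟫ := real_inner_comm _ _

open Matrix in
private lemma stmt17_bridge_det {d : ℕ}
    (T : EuclideanSpace ℝ (Fin d) →ₗ[ℝ] EuclideanSpace ℝ (Fin d)) :
    (Matrix.toEuclideanLin.symm T).det = LinearMap.det T := by
  rw [Matrix.toEuclideanLin_eq_toLin_orthonormal, Matrix.toLin_symm, LinearMap.det_toMatrix]

private lemma stmt17_vol {d : ℕ}
    (A : EuclideanSpace ℝ (Fin d) ≃ₗ[ℝ] EuclideanSpace ℝ (Fin d))
    (x : EuclideanSpace ℝ (Fin d)) (s : Set (EuclideanSpace ℝ (Fin d))) :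
    volume ((fun y => x + A y) '' s)
      = ENNReal.ofReal |LinearMap.det A.toLinearMap| * volume s := by
  have h : (fun y => x + A y) '' s = x +ᵥ (A.toLinearMap '' s) := by
    rw [← Set.image_vadd, Set.image_image]
    rfl
  rw [h, measure_vadd, Measure.addHaar_image_linearMap]

/-- **Uniqueness up to translation of maximal positive positions.**
If `K₁ = x₁ + S₁(K)` and `K₂ = x₂ + S₂(K)` are both maximal-volume positions of `K` inside
`L` among positions by self-adjoint positive definite `F`-operators and translations, then
`S₁ = S₂`, and in particular `K₂` is a translate of `K₁`. -/
theorem stmt17 {d : ℕ} (hd : 1 ≤ d)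
    (K L : Set (EuclideanSpace ℝ (Fin d)))
    (hKcpt : IsCompact K) (hKconv : Convex ℝ K) (hKint : (interior K).Nonempty)
    (hLcpt : IsCompact L) (hLconv : Convex ℝ L) (hLint : (interior L).Nonempty)
    (F : Submodule ℝ (EuclideanSpace ℝ (Fin d)))
    (S₁ S₂ : EuclideanSpace ℝ (Fin d) ≃ₗ[ℝ] EuclideanSpace ℝ (Fin d))
    (hS₁ : IsFOperator F S₁) (hS₂ : IsFOperator F S₂)
    (hS₁sa : ∀ x y : EuclideanSpace ℝ (Fin d), ⟪S₁ x, y⟫ = ⟪x, S₁ y⟫)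
    (hS₂sa : ∀ x y : EuclideanSpace ℝ (Fin d), ⟪S₂ x, y⟫ = ⟪x, S₂ y⟫)
    (hS₁pd : ∀ x : EuclideanSpace ℝ (Fin d), x ≠ 0 → 0 < ⟪S₁ x, x⟫)
    (hS₂pd : ∀ x : EuclideanSpace ℝ (Fin d), x ≠ 0 → 0 < ⟪S₂ x, x⟫)
    (x₁ x₂ : EuclideanSpace ℝ (Fin d))
    (h₁ : (fun y => x₁ + S₁ y) '' K ⊆ L)
    (h₂ : (fun y => x₂ + S₂ y) '' K ⊆ L)
    (hmax₁ : ∀ (S : EuclideanSpace ℝ (Fin d) ≃ₗ[ℝ] EuclideanSpace ℝ (Fin d)),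
      IsFOperator F S → (∀ x y : EuclideanSpace ℝ (Fin d), ⟪S x, y⟫ = ⟪x, S y⟫) →
      (∀ x : EuclideanSpace ℝ (Fin d), x ≠ 0 → 0 < ⟪S x, x⟫) →
      ∀ x : EuclideanSpace ℝ (Fin d), (fun y => x + S y) '' K ⊆ L →
        volume ((fun y => x + S y) '' K) ≤ volume ((fun y => x₁ + S₁ y) '' K))
    (hmax₂ : ∀ (S : EuclideanSpace ℝ (Fin d) ≃ₗ[ℝ] EuclideanSpace ℝ (Fin d)),
      IsFOperator F S → (∀ x y : EuclideanSpace ℝ (Fin d), ⟪S x, y⟫ = ⟪x, S y⟫) →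
      (∀ x : EuclideanSpace ℝ (Fin d), x ≠ 0 → 0 < ⟪S x, x⟫) →
      ∀ x : EuclideanSpace ℝ (Fin d), (fun y => x + S y) '' K ⊆ L →
        volume ((fun y => x + S y) '' K) ≤ volume ((fun y => x₂ + S₂ y) '' K)) :
    S₁ = S₂ ∧
      (fun y => x₂ + S₂ y) '' K = (fun w => w + (x₂ - x₁)) '' ((fun y => x₁ + S₁ y) '' K) := by
  classical
  -- the midpoint operator
  set T : EuclideanSpace ℝ (Fin d) →ₗ[ℝ] EuclideanSpace ℝ (Fin d) :=
    ((1:ℝ)/2) • (S₁.toLinearMap + S₂.toLinearMap) with hT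
  have hTapp : ∀ y, T y = ((1:ℝ)/2) • (S₁ y + S₂ y) := by
    intro y; simp [hT]
  have hTsa : ∀ x y : EuclideanSpace ℝ (Fin d), ⟪T x, y⟫ = ⟪x, T y⟫ := by
    intro x y
    simp only [hTapp, real_inner_smul_left, real_inner_smul_right, inner_add_left,
      inner_add_right, hS₁sa x y, hS₂sa x y]
  have hTpd : ∀ x : EuclideanSpace ℝ (Fin d), x ≠ 0 → 0 < ⟪T x, x⟫ := by
    intro x hx
    have h1 := hS₁pd x hx
    have h2 := hS₂pd x hx
    rw [hTapp, real_inner_smul_left, inner_add_left]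
    linarith
  have hTinj : Function.Injective T := by
    intro a b hab
    by_contra hne
    have h := hTpd (a - b) (sub_ne_zero.mpr hne)
    rw [map_sub, hab, sub_self] at h
    simp at h
  have hTbij : Function.Bijective T :=
    ⟨hTinj, (LinearMap.injective_iff_surjective).mp hTinj⟩
  set S : EuclideanSpace ℝ (Fin d) ≃ₗ[ℝ] EuclideanSpace ℝ (Fin d) :=
    LinearEquiv.ofBijective T hTbij with hSdef
  have hSapp : ∀ y, S y = T y := fun y => rfl
  have hST : S.toLinearMap = T := rfl
  have hSsa : ∀ x y : EuclideanSpace ℝ (Fin d), ⟪S x, y⟫ = ⟪x, S y⟫ := hTsa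
  have hSpd : ∀ x : EuclideanSpace ℝ (Fin d), x ≠ 0 → 0 < ⟪S x, x⟫ := hTpd
  obtain ⟨hF₁, hFp₁, μ₁, hμ₁0, hμ₁⟩ := id hS₁
  obtain ⟨hF₂, hFp₂, μ₂, hμ₂0, hμ₂⟩ := id hS₂
  -- S is an F-operator
  have hSF : IsFOperator F S := by
    refine ⟨?_, ?_, ?_⟩
    · intro x hx
      rw [hSapp, hTapp]
      exact Submodule.smul_mem _ _ (Submodule.add_mem _ (hF₁ x hx) (hF₂ x hx))
    · intro x hx
      rw [hSapp, hTapp]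
      exact Submodule.smul_mem _ _ (Submodule.add_mem _ (hFp₁ x hx) (hFp₂ x hx))
    · by_cases hbot : Fᗮ = ⊥
      · refine ⟨1, one_ne_zero, fun x hx => ?_⟩
        rw [hbot, Submodule.mem_bot] at hx
        subst hx
        simp
      · obtain ⟨x0, hx0F, hx00⟩ := Submodule.exists_mem_ne_zero_of_ne_bot hbot
        have hx0ip : 0 < ⟪x0, x0⟫ := by
          rw [real_inner_self_eq_norm_sq]
          have : ‖x0‖ ≠ 0 := norm_ne_zero_iff.mpr hx00
          positivity
        have hμ₁pos : 0 < μ₁ := by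
          have h := hS₁pd x0 hx00
          rw [hμ₁ x0 hx0F, real_inner_smul_left] at h
          nlinarith
        have hμ₂pos : 0 < μ₂ := by
          have h := hS₂pd x0 hx00
          rw [hμ₂ x0 hx0F, real_inner_smul_left] at h
          nlinarith
        refine ⟨((1:ℝ)/2) * (μ₁ + μ₂), by positivity, fun x hx => ?_⟩
        rw [hSapp, hTapp, hμ₁ x hx, hμ₂ x hx, ← add_smul, smul_smul]
  -- the midpoint position is inside L
  set xm : EuclideanSpace ℝ (Fin d) := ((1:ℝ)/2) • (x₁ + x₂) with hxm
  have hsub : (fun y => xm + S y) '' K ⊆ L := by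
    rintro _ ⟨y, hy, rfl⟩
    have e1 : x₁ + S₁ y ∈ L := h₁ ⟨y, hy, rfl⟩
    have e2 : x₂ + S₂ y ∈ L := h₂ ⟨y, hy, rfl⟩
    show xm + S y ∈ L
    have hmid : xm + S y = ((1:ℝ)/2) • (x₁ + S₁ y) + ((1:ℝ)/2) • (x₂ + S₂ y) := by
      rw [hSapp, hTapp, hxm]
      module
    rw [hmid]
    exact hLconv e1 e2 (by norm_num) (by norm_num) (by norm_num)
  -- matrices
  set M₁ : Matrix (Fin d) (Fin d) ℝ := Matrix.toEuclideanLin.symm S₁.toLinearMap with hM₁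
  set M₂ : Matrix (Fin d) (Fin d) ℝ := Matrix.toEuclideanLin.symm S₂.toLinearMap with hM₂
  set Mm : Matrix (Fin d) (Fin d) ℝ := Matrix.toEuclideanLin.symm T with hMm
  have hM₁pd : M₁.PosDef := stmt17_bridge_posdef _ hS₁sa hS₁pd
  have hM₂pd : M₂.PosDef := stmt17_bridge_posdef _ hS₂sa hS₂pd
  have hMmpd : Mm.PosDef := stmt17_bridge_posdef _ hTsa hTpd
  have hMmeq : Mm = ((1:ℝ)/2) • (M₁ + M₂) := by
    rw [hMm, hT, _root_.map_smul, _root_.map_add, ← hM₁, ← hM₂]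
  have hd₁ : LinearMap.det S₁.toLinearMap = M₁.det := (stmt17_bridge_det _).symm
  have hd₂ : LinearMap.det S₂.toLinearMap = M₂.det := (stmt17_bridge_det _).symm
  have hdm : LinearMap.det S.toLinearMap = Mm.det := by
    rw [hST]; exact (stmt17_bridge_det _).symm
  -- volume facts
  have hvK0 : volume K ≠ 0 := (MeasureTheory.Measure.measure_pos_of_nonempty_interior volume hKint).ne'
  have hvKtop : volume K ≠ ⊤ := hKcpt.measure_lt_top.ne
  have habs : ∀ (f : EuclideanSpace ℝ (Fin d) →ₗ[ℝ] EuclideanSpace ℝ (Fin d))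
      (M : Matrix (Fin d) (Fin d) ℝ), LinearMap.det f = M.det → M.PosDef →
      |LinearMap.det f| = M.det := by
    intro f M h hpd
    rw [h, abs_of_pos hpd.det_pos]
  have ha₁ := habs _ _ hd₁ hM₁pd
  have ha₂ := habs _ _ hd₂ hM₂pd
  have ham := habs _ _ hdm hMmpd
  have hcompare : ∀ a b : ℝ, 0 ≤ b →
      ENNReal.ofReal a * volume K ≤ ENNReal.ofReal b * volume K → a ≤ b := by
    intro a b hb h
    exact (ENNReal.ofReal_le_ofReal_iff hb).mp
      ((ENNReal.mul_le_mul_iff_left hvK0 hvKtop).mp h)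
  -- volume comparisons
  have hle21 : M₁.det ≤ M₂.det := by
    have h := hmax₂ S₁ hS₁ hS₁sa hS₁pd x₁ h₁
    rw [stmt17_vol, stmt17_vol, ha₁, ha₂] at h
    exact hcompare _ _ hM₂pd.det_pos.le h
  have hle12 : M₂.det ≤ M₁.det := by
    have h := hmax₁ S₂ hS₂ hS₂sa hS₂pd x₂ h₂
    rw [stmt17_vol, stmt17_vol, ha₁, ha₂] at h
    exact hcompare _ _ hM₁pd.det_pos.le h
  have hdeteq : M₁.det = M₂.det := le_antisymm hle21 hle12
  have hlem : Mm.det ≤ M₁.det := by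
    have h := hmax₁ S hSF hSsa hSpd xm hsub
    rw [stmt17_vol, stmt17_vol, ha₁, ham] at h
    exact hcompare _ _ hM₁pd.det_pos.le h
  -- determinant inequality in the required form
  have hMmdet : Mm.det = ((1:ℝ)/2) ^ d * (M₁ + M₂).det := by
    rw [hMmeq, Matrix.det_smul, Fintype.card_fin]
  have h2d : (0:ℝ) < 2 ^ d := by positivity
  have hhalf : ((1:ℝ)/2) ^ d * (2:ℝ) ^ d = 1 := by
    rw [← mul_pow]; norm_num
  have hdetle : (M₁ + M₂).det ≤ 2 ^ d * M₁.det := by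
    rw [hMmdet] at hlem
    have h := mul_le_mul_of_nonneg_left hlem h2d.le
    calc (M₁ + M₂).det = (2:ℝ) ^ d * (((1:ℝ)/2) ^ d * (M₁ + M₂).det) := by
          rw [← mul_assoc, mul_comm ((2:ℝ) ^ d), hhalf, one_mul]
      _ ≤ 2 ^ d * M₁.det := h
  -- conclude
  have hMeq : M₁ = M₂ := stmt17_aux_core hM₁pd hM₂pd hdeteq hdetle
  have hS12 : S₁ = S₂ := by
    apply LinearEquiv.toLinearMap_injective
    exact Matrix.toEuclideanLin.symm.injective (by rw [← hM₁, ← hM₂, hMeq])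
  refine ⟨hS12, ?_⟩
  rw [Set.image_image]
  refine (Set.image_congr' (fun y => ?_)).symm
  rw [hS12]
  abel
end
end
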